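/- Let (w_n)_{n≥0} be integers with w_n ≥ 1 and (a_{n,j})_{1≤j≤w_n−1} nonnegative integers; define h₀ = 1, h_{n+1} = w_n h_n + ∑_{j=1}^{w_n−1} a_{n,j}, s_n(0) = 0, s_n(k) = a_{n,1}+⋯+a_{n,k} for 1 ≤ k < w_n, and P_n(θ) = w_n^{−1/2} ∑_{k=0}^{w_n−1} e((k h_n + s_n(k))θ). Then for every n ≥ 1 the map (k₁,…,k_n) ↦ ∑_{j=1}^n (k_j h_j + s_j(k_j)), defined for 0 ≤ k_j ≤ w_j − 1, is injective, and consequently ∫₀¹ ∏_{j=1}^n |P_j(θ)|² dθ = 1. -/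

import Mathlib

/-! The frequencies `k h_j + s_j(k)`, `0 ≤ k < w_j`, behave like the digits of a mixed-radix
expansion: consecutive ones are at least `h_j` apart, and even the largest one plus `h_j` is at
most `h_{j+1}`. Hence the frequencies of levels `< m` add up to less than `h_m`, so the top digit of
a sum is determined by the sum, which gives injectivity. Expanding the product, `∏ |P_j|²` is
`(∏ w_j)⁻¹ |∑_k e(F(k) θ)|²` for the distinct integer frequencies `F(k)`, and by orthogonality of the
characters `e(m θ)` on `[0, 1]` its integral is the number of terms, `∏ w_j`. -/

open Finset intervalIntegral

/-- `e θ = e^{2πiθ}`. -/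
noncomputable def e (θ : ℝ) : ℂ := Complex.exp (2 * Real.pi * Complex.I * θ)

section MixedRadix

variable {w H : ℕ → ℕ} {f : ℕ → ℕ → ℕ}
  (hstep : ∀ j k k', k < k' → f j k + H j ≤ f j k')
  (htop : ∀ j k, k < w j → f j k + H j ≤ H (j + 1))

include htop in
theorem sum_digits_add_le {n : ℕ} (k : Fin n → ℕ) (hk : ∀ j, k j < w j) :
    ∑ j : Fin n, f j (k j) + H 0 ≤ H n := by
  induction n with
  | zero => simp
  | succ n ih =>
    have hlow := ih (fun j => k j.castSucc) (fun j => hk j.castSucc)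
    have hlast := htop n (k (Fin.last n)) (hk (Fin.last n))
    rw [Fin.sum_univ_castSucc]
    simp only [Fin.val_castSucc, Fin.val_last] at hlow hlast ⊢
    omega

include hstep htop in
theorem sum_digits_injective (hH : 0 < H 0) {n : ℕ} {k k' : Fin n → ℕ}
    (hk : ∀ j, k j < w j) (hk' : ∀ j, k' j < w j)
    (heq : ∑ j : Fin n, f j (k j) = ∑ j : Fin n, f j (k' j)) : k = k' := by
  induction n with
  | zero => exact funext fun j => j.elim0
  | succ n ih =>
    rw [Fin.sum_univ_castSucc, Fin.sum_univ_castSucc] at heq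
    have hlow := sum_digits_add_le htop (fun j => k j.castSucc) (fun j => hk j.castSucc)
    have hlow' := sum_digits_add_le htop (fun j => k' j.castSucc) (fun j => hk' j.castSucc)
    simp only [Fin.val_castSucc, Fin.val_last] at heq hlow hlow'
    -- the lower digits contribute less than `H n`, the gap between consecutive values of `f n`
    have hlast : k (Fin.last n) = k' (Fin.last n) := by
      rcases Nat.lt_trichotomy (k (Fin.last n)) (k' (Fin.last n)) with hlt | heq' | hgt
      · have := hstep n _ _ hlt
        omega
      · exact heq'
      · have := hstep n _ _ hgt
        omega
    have hinit : (fun j : Fin n => k j.castSucc) = fun j => k' j.castSucc :=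
      ih (fun j => hk j.castSucc) (fun j => hk' j.castSucc) (by rw [hlast] at heq; omega)
    funext j
    induction j using Fin.lastCases with
    | last => exact hlast
    | cast j => exact congrFun hinit j

end MixedRadix

theorem mul_add_sum_Icc_add_le {c k k' : ℕ} (a : ℕ → ℕ) (hkk' : k < k') :
    k * c + ∑ i ∈ Icc 1 k, a i + c ≤ k' * c + ∑ i ∈ Icc 1 k', a i := by
  have hsum := sum_le_sum_of_subset (f := a) (Icc_subset_Icc_right (a := 1) hkk'.le)
  have hmul : (k + 1) * c ≤ k' * c := Nat.mul_le_mul_right c hkk'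
  linarith [add_mul k 1 c]

theorem mul_add_sum_Icc_add_le_of_lt {c k m : ℕ} (a : ℕ → ℕ) (hkm : k < m) :
    k * c + ∑ i ∈ Icc 1 k, a i + c ≤ m * c + ∑ i ∈ Icc 1 (m - 1), a i := by
  have hsum := sum_le_sum_of_subset (f := a)
    (Icc_subset_Icc_right (a := 1) (Nat.le_sub_one_of_lt hkm))
  have hmul : (k + 1) * c ≤ m * c := Nat.mul_le_mul_right c hkm
  linarith [add_mul k 1 c]

theorem e_add (x y : ℝ) : e (x + y) = e x * e y := by
  rw [e, e, e, ← Complex.exp_add]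
  push_cast
  ring_nf

theorem e_sum {ι : Type*} (s : Finset ι) (x : ι → ℝ) :
    e (∑ i ∈ s, x i) = ∏ i ∈ s, e (x i) := by
  simp only [e, ← Complex.exp_sum, Complex.ofReal_sum, Finset.mul_sum]

theorem conj_e (x : ℝ) : starRingEnd ℂ (e x) = e (-x) := by
  rw [e, e, ← Complex.exp_conj]
  congr 1
  simp [Complex.ext_iff]

theorem continuous_e : Continuous e := by
  unfold e
  fun_prop

theorem integral_e_intCast_mul (m : ℤ) :
    ∫ θ in (0:ℝ)..1, e (m * θ) = if m = 0 then 1 else 0 := by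
  split_ifs with hm
  · simp [hm, e]
  · have hc : 2 * Real.pi * Complex.I * m ≠ 0 := by simp [Real.pi_ne_zero, hm]
    simp only [e, Complex.ofReal_mul, Complex.ofReal_intCast, ← mul_assoc]
    rw [integral_exp_mul_complex hc, div_eq_zero_iff, sub_eq_zero]
    left
    have := Complex.exp_int_mul_two_pi_mul_I m
    simp only [Complex.ofReal_one, mul_one, Complex.ofReal_zero, mul_zero, Complex.exp_zero]
    rw [← this]
    ring_nf

theorem integral_e_mul_conj_e (m m' : ℤ) :
    ∫ θ in (0:ℝ)..1, e (m * θ) * starRingEnd ℂ (e (m' * θ)) = if m = m' then 1 else 0 := by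
  have hfreq : ∀ θ : ℝ,
      e (m * θ) * starRingEnd ℂ (e (m' * θ)) = e ((m - m' : ℤ) * θ) := by
    intro θ
    rw [conj_e, ← e_add]
    push_cast
    ring_nf
  simp only [hfreq, integral_e_intCast_mul, sub_eq_zero]

theorem integral_norm_sq_sum_e {ι : Type*} [Fintype ι] {F : ι → ℤ}
    (hF : Function.Injective F) :
    ∫ θ in (0:ℝ)..1, ‖∑ p, e (F p * θ)‖ ^ 2 = Fintype.card ι := by
  classical
  have hcont : ∀ p q, Continuous fun θ : ℝ => e (F p * θ) * starRingEnd ℂ (e (F q * θ)) :=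
    fun p q => (continuous_e.comp (by fun_prop)).mul
      ((Complex.continuous_conj.comp continuous_e).comp (by fun_prop))
  have hexpand : ∀ θ : ℝ, ((‖∑ p, e (F p * θ)‖ ^ 2 : ℝ) : ℂ) =
      ∑ p, ∑ q, e (F p * θ) * starRingEnd ℂ (e (F q * θ)) := by
    intro θ
    rw [Complex.ofReal_pow, ← Complex.mul_conj', map_sum, sum_mul_sum]
  apply Complex.ofReal_injective
  rw [← intervalIntegral.integral_ofReal]
  simp only [hexpand]
  rw [intervalIntegral.integral_finsetSum fun p _ =>
    (continuous_finsetSum _ fun q _ => hcont p q).intervalIntegrable 0 1]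
  simp only [intervalIntegral.integral_finsetSum fun q _ => (hcont _ q).intervalIntegrable 0 1,
    integral_e_mul_conj_e]
  simp [hF.eq_iff]

theorem prod_sum_e {ι : Type*} [Fintype ι] [DecidableEq ι] {κ : ι → Type*}
    [∀ i, Fintype (κ i)] (g : (i : ι) → κ i → ℤ) (θ : ℝ) :
    ∏ i, ∑ k, e (g i k * θ) =
      ∑ p : (i : ι) → κ i, e ((∑ i, g i (p i) : ℤ) * θ) := by
  rw [prod_univ_sum, Fintype.piFinset_univ]
  refine sum_congr rfl fun p _ => ?_
  rw [Int.cast_sum, sum_mul, e_sum]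

theorem prod_norm_sq_inv_sqrt_mul_sum_e {ι : Type*} [Fintype ι] [DecidableEq ι] (m : ι → ℕ)
    (g : (i : ι) → Fin (m i) → ℤ) (θ : ℝ) :
    ∏ i, ‖(1 / (Real.sqrt (m i) : ℂ)) * ∑ k, e (g i k * θ)‖ ^ 2 =
      (∏ i, (m i : ℝ))⁻¹ * ‖∑ p : (i : ι) → Fin (m i), e ((∑ i, g i (p i) : ℤ) * θ)‖ ^ 2 := by
  simp only [norm_mul, mul_pow, prod_mul_distrib, prod_pow, ← norm_prod, prod_sum_e]
  congr 1
  rw [← prod_inv_distrib, norm_prod, ← prod_pow]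
  refine prod_congr rfl fun i _ => ?_
  simp

theorem injective_sum_frequencies {w : ℕ → ℕ} (hw : 1 ≤ w 0) {a : ℕ → ℕ → ℕ} {h : ℕ → ℕ}
    (h0 : h 0 = 1) (hrec : ∀ n, h (n + 1) = w n * h n + ∑ j ∈ Icc 1 (w n - 1), a n j)
    {s : ℕ → ℕ → ℕ} (hs : ∀ n k, s n k = ∑ j ∈ Icc 1 k, a n j) (n : ℕ) :
    Function.Injective (fun k : (j : Fin n) → Fin (w (j.1 + 1)) =>
      ∑ j : Fin n, ((k j : ℕ) * h (j.1 + 1) + s (j.1 + 1) (k j))) := by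
  intro k k' hkk'
  have hH : 0 < h 1 := by
    rw [hrec, h0]
    exact Nat.lt_of_lt_of_le hw (by simp)
  have := sum_digits_injective (w := fun j => w (j + 1)) (H := fun j => h (j + 1))
    (f := fun j k => k * h (j + 1) + s (j + 1) k)
    (fun j k k' hkk' => by simpa only [hs] using mul_add_sum_Icc_add_le _ hkk')
    (fun j k hk => by simpa only [hs, hrec] using mul_add_sum_Icc_add_le_of_lt _ hk)
    hH (k := fun j => k j) (k' := fun j => k' j) (fun j => (k j).2) (fun j => (k' j).2) hkk'
  exact funext fun j => Fin.ext (congrFun this j)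

theorem stmt_2_general (w : ℕ → ℕ) (hw : ∀ n, 1 ≤ w n) (a : ℕ → ℕ → ℕ)
    (h : ℕ → ℕ) (h0 : h 0 = 1)
    (hrec : ∀ n, h (n + 1) = w n * h n + ∑ j ∈ Finset.Icc 1 (w n - 1), a n j)
    (s : ℕ → ℕ → ℕ) (hs : ∀ n k, s n k = ∑ j ∈ Finset.Icc 1 k, a n j)
    (P : ℕ → ℝ → ℂ)
    (hP : ∀ n θ, P n θ =
      (1 / (Real.sqrt (w n) : ℂ)) *
        ∑ k ∈ Finset.range (w n), e ((k * h n + s n k) * θ))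
    (n : ℕ) :
    Function.Injective (fun k : (j : Fin n) → Fin (w (j.1 + 1)) =>
      ∑ j : Fin n, ((k j : ℕ) * h (j.1 + 1) + s (j.1 + 1) (k j))) ∧
    (∫ θ in (0:ℝ)..1, ∏ j ∈ Finset.Icc 1 n, ‖P j θ‖ ^ 2) = 1 := by
  set F := fun k : (j : Fin n) → Fin (w (j.1 + 1)) =>
    ∑ j : Fin n, ((k j : ℕ) * h (j.1 + 1) + s (j.1 + 1) (k j))
  have hinj : Function.Injective F := injective_sum_frequencies (hw 0) h0 hrec hs n
  refine ⟨hinj, ?_⟩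
  set W : ℝ := ∏ j : Fin n, (w (j + 1) : ℝ)
  have hW : W ≠ 0 := prod_ne_zero_iff.mpr fun j _ => by have := hw (j + 1); positivity
  have hnorm : ∀ θ, ∏ j ∈ Icc 1 n, ‖P j θ‖ ^ 2 = W⁻¹ * ‖∑ k, e ((F k : ℤ) * θ)‖ ^ 2 := by
    intro θ
    rw [← Ico_add_one_right_eq_Icc, prod_Ico_eq_prod_range, ← Fin.prod_univ_eq_prod_range]
    simp only [add_comm 1, hP, sum_range fun k => e ((k * h _ + s _ k) * θ)]
    convert prod_norm_sq_inv_sqrt_mul_sum_e (fun j : Fin n => w (j + 1))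
      (fun j k => ((k * h (j + 1) + s (j + 1) k : ℕ) : ℤ)) θ using 6
    all_goals push_cast [F]; rfl
  calc (∫ θ in (0:ℝ)..1, ∏ j ∈ Icc 1 n, ‖P j θ‖ ^ 2)
      = ∫ θ in (0:ℝ)..1, W⁻¹ * ‖∑ k, e ((F k : ℤ) * θ)‖ ^ 2 :=
        integral_congr fun θ _ => hnorm θ
    _ = W⁻¹ * Fintype.card ((j : Fin n) → Fin (w (j + 1))) := by
      rw [integral_const_mul,
        integral_norm_sq_sum_e (F := fun k => (F k : ℤ)) (Nat.cast_injective.comp hinj)]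
    _ = 1 := by
      rw [Fintype.card_pi]
      push_cast
      simp [W, hW]

/-- Distinctness of the Riesz-product frequencies and the normalization (0.14):
the map `(k₁,…,k_n) ↦ ∑_{j=1}^n (k_j h_j + s_j(k_j))` (with `0 ≤ k_j ≤ w_j − 1`)
is injective, and `∫₀¹ ∏_{j=1}^n |P_j(θ)|² dθ = 1`. -/
theorem stmt_2 (w : ℕ → ℕ) (hw : ∀ n, 1 ≤ w n) (a : ℕ → ℕ → ℕ)
    (h : ℕ → ℕ) (h0 : h 0 = 1)
    (hrec : ∀ n, h (n + 1) = w n * h n + ∑ j ∈ Finset.Icc 1 (w n - 1), a n j)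
    (s : ℕ → ℕ → ℕ) (hs : ∀ n k, s n k = ∑ j ∈ Finset.Icc 1 k, a n j)
    (P : ℕ → ℝ → ℂ)
    (hP : ∀ n θ, P n θ =
      (1 / (Real.sqrt (w n) : ℂ)) *
        ∑ k ∈ Finset.range (w n), e ((k * h n + s n k) * θ))
    (n : ℕ) (hn : 1 ≤ n) :
    Function.Injective (fun k : (j : Fin n) → Fin (w (j.1 + 1)) =>
      ∑ j : Fin n, ((k j : ℕ) * h (j.1 + 1) + s (j.1 + 1) (k j))) ∧
    (∫ θ in (0:ℝ)..1, ∏ j ∈ Finset.Icc 1 n, ‖P j θ‖ ^ 2) = 1 :=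
  stmt_2_general w hw a h h0 hrec s hs P hP n
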